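/- Suppose a finite connected graph G is the union of two subgraphs A and B whose graphs contain no odd cycle, such that the intersection A ∩ B is connected and nonempty. Then G contains no odd cycle. -/

import Mathlib

/-!
An odd closed walk that is not a cycle splits at a repeated vertex into two shorter closed
walks, one of which is odd; so a graph without odd cycles has only even closed walks and is
2-colourable. Two proper 2-colourings of a connected graph either agree everywhere or disagree
everywhere. Hence, after swapping the two colours on `B` if necessary, 2-colourings of `A` and
`B` agree on the connected intersection `A ⊓ B` and glue to a 2-colouring of `A ⊔ B = G`.
-/

namespace SimpleGraph

variable {V : Type*} {G : SimpleGraph V}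

namespace Walk

theorem exists_eq_append_of_start_mem_support_tail {u v : V} (p : G.Walk u v)
    (hu : u ∈ p.support.tail) :
    ∃ (c : G.Walk u u) (q : G.Walk u v), ¬ c.Nil ∧ p = c.append q := by
  classical
  cases p with
  | nil => simp at hu
  | cons h r =>
    rw [support_cons, List.tail_cons] at hu
    exact ⟨cons h (r.takeUntil u hu), r.dropUntil u hu, not_nil_cons, by
      rw [cons_append, take_spec]⟩

theorem exists_eq_append_append_of_not_nodup_support {u v : V} (p : G.Walk u v)
    (hp : ¬ p.support.Nodup) :
    ∃ (x : V) (p₁ : G.Walk u x) (c : G.Walk x x) (p₂ : G.Walk x v),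
      ¬ c.Nil ∧ p = p₁.append (c.append p₂) := by
  classical
  obtain ⟨x, hx⟩ := List.exists_duplicate_iff_not_nodup.mpr hp
  have hmem : x ∈ p.support := hx.mem
  -- `x` occurs only once in `p.takeUntil x`, so it recurs after the start of `p.dropUntil x`.
  have hx_tail : x ∈ (p.dropUntil x hmem).support.tail := by
    have h2 := List.duplicate_iff_two_le_count.mp hx
    rw [← p.take_spec hmem, support_append, List.count_append,
      p.count_support_takeUntil_eq_one] at h2
    exact List.count_pos_iff.mp (by omega)
  obtain ⟨c, p₂, hc, hd⟩ := exists_eq_append_of_start_mem_support_tail _ hx_tail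
  exact ⟨x, p.takeUntil x hmem, c, p₂, hc, by rw [← hd, take_spec]⟩

theorem length_ne_one {u : V} (p : G.Walk u u) : p.length ≠ 1 := by
  cases p with
  | nil => simp
  | cons h q =>
    intro hq
    rw [length_cons, Nat.add_eq_right] at hq
    exact G.ne_of_adj h (eq_of_length_eq_zero hq).symm

theorem exists_isCycle_of_odd_length {u : V} (w : G.Walk u u) (hw : Odd w.length) :
    ∃ (v : V) (c : G.Walk v v), c.IsCycle ∧ Odd c.length := by
  induction hn : w.length using Nat.strong_induction_on generalizing u with
  | _ n ih =>
    subst hn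
    cases w with
    | nil => simp at hw
    | cons h q =>
      by_cases hq : q.support.Nodup
      · refine ⟨u, cons h q, isCycle_iff_isPath_tail_and_le_length.mpr ⟨?_, ?_⟩, hw⟩
        · simpa using IsPath.mk' hq
        · have := (cons h q).length_ne_one
          obtain ⟨k, hk⟩ := hw
          omega
      · obtain ⟨x, p₁, c, p₂, hc, rfl⟩ := q.exists_eq_append_append_of_not_nodup_support hq
        have hc0 : c.length ≠ 0 := fun h0 => hc (length_eq_zero_iff.mp h0)
        have hlen : (cons h (p₁.append (c.append p₂))).length
            = (cons h (p₁.append p₂)).length + c.length := by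
          simp only [length_cons, length_append]
          omega
        rcases Nat.even_or_odd c.length with hc_even | hc_odd
        · rw [hlen] at hw
          exact ih _ (by omega) (cons h (p₁.append p₂)) ((Nat.odd_add.mp hw).mpr hc_even) rfl
        · exact ih _ (by rw [hlen]; simp) c hc_odd rfl

end Walk

theorem colorable_two_of_forall_isCycle_not_odd
    (h : ∀ (v : V) (c : G.Walk v v), c.IsCycle → ¬ Odd c.length) : G.Colorable 2 :=
  two_colorable_iff_forall_loop_even.mpr fun _ w => Nat.not_odd_iff_even.mp fun hw =>
    let ⟨v, c, hc, hodd⟩ := w.exists_isCycle_of_odd_length hw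
    h v c hc hodd

theorem colorable_two_iff_nonempty_coloring_bool : G.Colorable 2 ↔ Nonempty (G.Coloring Bool) :=
  (recolorOfEquiv G finTwoEquiv).nonempty_congr

theorem Coloring.eq_iff_eq_of_reachable (C D : G.Coloring Bool) {u v : V} (h : G.Reachable u v) :
    C u = D u ↔ C v = D v := by
  obtain ⟨p⟩ := h
  have := (C.even_length_iff_congr p).symm.trans (D.even_length_iff_congr p)
  grind

theorem Coloring.forall_eq_or_forall_ne_of_preconnected (hG : G.Preconnected)
    (C D : G.Coloring Bool) : (∀ v, C v = D v) ∨ (∀ v, C v ≠ D v) := by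
  by_cases h : ∃ u, C u = D u
  · obtain ⟨u, hu⟩ := h
    exact .inl fun v => (C.eq_iff_eq_of_reachable D (hG u v)).mp hu
  · exact .inr fun v hv => h ⟨v, hv⟩

namespace Subgraph

variable {A B : G.Subgraph} {α : Type*}

open Classical in
noncomputable def coloringSup (CA : A.coe.Coloring α) (CB : B.coe.Coloring α)
    (h : ∀ v (hA : v ∈ A.verts) (hB : v ∈ B.verts), CA ⟨v, hA⟩ = CB ⟨v, hB⟩) :
    (A ⊔ B).coe.Coloring α :=
  Coloring.mk (fun v => if hA : v.1 ∈ A.verts then CA ⟨v, hA⟩ else CB ⟨v, v.2.resolve_left hA⟩)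
    (by
      rintro v w (hadj | hadj)
      · rw [dif_pos hadj.fst_mem, dif_pos hadj.snd_mem]
        exact CA.valid hadj
      · have hv := hadj.fst_mem
        have hw := hadj.snd_mem
        have : CB ⟨v, hv⟩ ≠ CB ⟨w, hw⟩ := CB.valid hadj
        split_ifs <;> simp_all)

theorem colorable_two_sup_of_preconnected_inf (hI : (A ⊓ B).Preconnected)
    (hA : A.coe.Colorable 2) (hB : B.coe.Colorable 2) : (A ⊔ B).coe.Colorable 2 := by
  rw [colorable_two_iff_nonempty_coloring_bool] at hA hB ⊢
  obtain ⟨CA⟩ := hA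
  obtain ⟨CB⟩ := hB
  rcases Coloring.forall_eq_or_forall_ne_of_preconnected hI.coe (CA.comp (inclusion inf_le_left))
    (CB.comp (inclusion inf_le_right)) with hagree | hdisagree
  · exact ⟨coloringSup CA CB fun v hA hB => hagree ⟨v, hA, hB⟩⟩
  · refine ⟨coloringSup CA (recolorOfEquiv _ Equiv.boolNot CB) fun v hA hB => ?_⟩
    exact Bool.eq_not.mpr (hdisagree ⟨v, hA, hB⟩)

end Subgraph

end SimpleGraph

open SimpleGraph

theorem union_no_odd_cycle_general {V : Type*} (G : SimpleGraph V)
    (A B : G.Subgraph) (hAB : A ⊔ B = ⊤)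
    (hA : ∀ (v : A.verts) (w : A.coe.Walk v v), w.IsCycle → ¬ Odd w.length)
    (hB : ∀ (v : B.verts) (w : B.coe.Walk v v), w.IsCycle → ¬ Odd w.length)
    (hI : (A ⊓ B).Connected) :
    ∀ (v : V) (w : G.Walk v v), w.IsCycle → ¬ Odd w.length := by
  have hsup : (A ⊔ B).coe.Colorable 2 := Subgraph.colorable_two_sup_of_preconnected_inf
    hI.preconnected (colorable_two_of_forall_isCycle_not_odd hA)
    (colorable_two_of_forall_isCycle_not_odd hB)
  rw [hAB, colorable_congr Subgraph.topIso] at hsup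
  intro v w _
  exact Nat.not_odd_iff_even.mpr (two_colorable_iff_forall_loop_even.mp hsup v w)

/-- Gluing two odd-cycle-free subgraphs along a connected nonempty intersection
yields an odd-cycle-free graph: if the connected graph `G` is the union of subgraphs
`A` and `B` with no odd cycles and `A ∩ B` is connected (hence nonempty), then `G`
has no odd cycle. -/
theorem union_no_odd_cycle {V : Type*} [Fintype V] (G : SimpleGraph V)
    (hG : G.Connected) (A B : G.Subgraph) (hAB : A ⊔ B = ⊤)
    (hA : ∀ (v : A.verts) (w : A.coe.Walk v v), w.IsCycle → ¬ Odd w.length)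
    (hB : ∀ (v : B.verts) (w : B.coe.Walk v v), w.IsCycle → ¬ Odd w.length)
    (hI : (A ⊓ B).Connected) :
    ∀ (v : V) (w : G.Walk v v), w.IsCycle → ¬ Odd w.length :=
  union_no_odd_cycle_general G A B hAB hA hB hI
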